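/- arXiv:1103.3027 — 2 statements merged into one kernel-verified Lean document; each statement's English description precedes it below -/
import Mathlib

section
/- For 1 < p < ∞ and j ≥ 1, there exists a trigonometric polynomial g_j with spectrum in [0, j·2^{j+1}) such that ‖g_j‖_{L^p(𝕋)} ≤ 1 and for every 1 ≤ J ≤ j and every x within distance 2^{−j} of an odd multiple of 2^{−J}, there exist integers 0 ≤ n₁ < n₂ < j·2^{j+1} with |S_{n₂} g_j(x) − S_{n₁} g_j(x)| ≥ (1/(4j))·2^{−(J−j+1)/p}. -/
/-!
Write `e(t) = exp(2πit)` and `D_N(y) = ∑_{k<N} e(ky)`. For each scale `1 ≤ J ≤ j` the bump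
`|D_N(2^{J-1}x - 1/2)|² / N²` with `N = 2^{j-1-J}` takes values in `[0, 1]`, has integral `1/N`
over a period and is at least `1/4` within `2^{-j}` of every odd multiple of `2^{-J}`. Let `h` be
the average over `J` of these bumps weighted by `2^{(j-J-1)/p}`. Then `h` is large on every such
neighbourhood, and by Jensen's inequality together with `G^p ≤ G` for `0 ≤ G ≤ 1` we get
`∫ h^p ≤ 1`. Multiplying by `e(2^{j-1}x)` moves the spectrum of `h` into `(0, 2^j)`. For the
resulting `g` we have `S_0 g = 0` and `S_{2^j} g = g`, so the two partial sums differ by `|g| = h`.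
-/

open Real Complex intervalIntegral Finset

theorem Finset.sum_fiberwise_mul_of_maps_to {ι κ R : Type*} [DecidableEq κ]
    [NonUnitalNonAssocSemiring R] {s : Finset ι} {t : Finset κ} {g : ι → κ}
    (h : ∀ i ∈ s, g i ∈ t) (c : ι → R) (e : κ → R) :
    ∑ m ∈ t, (∑ i ∈ s with g i = m, c i) * e m = ∑ i ∈ s, c i * e (g i) := by
  simp_rw [sum_mul]
  refine (sum_congr rfl fun m _ => sum_congr rfl fun i hi => ?_).trans
    (sum_fiberwise_of_maps_to h _)
  rw [(mem_filter.1 hi).2]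

theorem integral_rpow_le_integral_of_le_one {G : ℝ → ℝ} {a b p : ℝ} (hab : a ≤ b)
    (hG : Continuous G) (hG0 : ∀ x, 0 ≤ G x) (hG1 : ∀ x, G x ≤ 1) (hp : 1 ≤ p) :
    ∫ x in a..b, G x ^ p ≤ ∫ x in a..b, G x :=
  integral_mono_on hab ((hG.rpow_const fun _ => Or.inr (by linarith)).intervalIntegrable a b)
    (hG.intervalIntegrable a b) fun x _ => by
      simpa using Real.rpow_le_rpow_of_exponent_ge' (hG0 x) (hG1 x) zero_le_one hp

theorem integral_mean_rpow_le {ι : Type*} {s : Finset ι} (hs : s.Nonempty) {u : ι → ℝ → ℝ}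
    {a b p C : ℝ} (hab : a ≤ b) (hp : 1 ≤ p) (hu : ∀ i ∈ s, Continuous (u i))
    (hu0 : ∀ i ∈ s, ∀ x, 0 ≤ u i x) (hC : ∀ i ∈ s, ∫ x in a..b, u i x ^ p ≤ C) :
    ∫ x in a..b, ((#s : ℝ)⁻¹ * ∑ i ∈ s, u i x) ^ p ≤ C := by
  have hp0 : 0 ≤ p := by linarith
  have hcard : (0 : ℝ) < #s := by exact_mod_cast hs.card_pos
  have hpow : ∀ i ∈ s, Continuous fun x => u i x ^ p :=
    fun i hi => (hu i hi).rpow_const fun _ => Or.inr hp0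
  have hmean : Continuous fun x => ((#s : ℝ)⁻¹ * ∑ i ∈ s, u i x) ^ p :=
    (continuous_const.mul (continuous_finsetSum s hu)).rpow_const fun _ => Or.inr hp0
  have hjensen : ∀ x, ((#s : ℝ)⁻¹ * ∑ i ∈ s, u i x) ^ p ≤ ∑ i ∈ s, (#s : ℝ)⁻¹ * u i x ^ p := by
    intro x
    rw [mul_sum]
    refine Real.rpow_arith_mean_le_arith_mean_rpow s (fun _ => (#s : ℝ)⁻¹) (u · x)
      (fun _ _ => by positivity) ?_ (fun i hi => hu0 i hi x) hp
    rw [sum_const, nsmul_eq_mul, mul_inv_cancel₀ hcard.ne']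
  calc ∫ x in a..b, ((#s : ℝ)⁻¹ * ∑ i ∈ s, u i x) ^ p
      ≤ ∫ x in a..b, ∑ i ∈ s, (#s : ℝ)⁻¹ * u i x ^ p :=
        integral_mono_on hab (hmean.intervalIntegrable a b)
          ((continuous_finsetSum s fun i hi => continuous_const.mul (hpow i hi)).intervalIntegrable
            a b) fun x _ => hjensen x
    _ = ∑ i ∈ s, (#s : ℝ)⁻¹ * ∫ x in a..b, u i x ^ p := by
        rw [integral_finsetSum (f := fun i x => (#s : ℝ)⁻¹ * u i x ^ p) fun i hi =>
          (continuous_const.mul (hpow i hi)).intervalIntegrable a b]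
        simp only [integral_const_mul]
    _ ≤ ∑ i ∈ s, (#s : ℝ)⁻¹ * C := sum_le_sum fun i hi => by gcongr; exact hC i hi
    _ = C := by rw [sum_const, nsmul_eq_mul, ← mul_assoc, mul_inv_cancel₀ hcard.ne', one_mul]

theorem integral_exp_two_pi_I_int_mul (n : ℤ) :
    ∫ x in (0 : ℝ)..1, Complex.exp (2 * π * I * n * x) = if n = 0 then 1 else 0 := by
  split_ifs with hn
  · simp [hn]
  · have hc : 2 * π * I * n ≠ 0 := by simp [hn, pi_ne_zero, I_ne_zero]
    rw [integral_exp_mul_complex hc]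
    have : Complex.exp (2 * π * I * n) = 1 := by rw [mul_comm, exp_int_mul_two_pi_mul_I]
    simp [this]

noncomputable section

def dirichletSum (N : ℕ) (y : ℝ) : ℂ := ∑ k ∈ range N, Complex.exp (2 * π * I * k * y)

theorem continuous_dirichletSum (N : ℕ) : Continuous (dirichletSum N) :=
  continuous_finsetSum _ fun _ _ => by fun_prop

theorem norm_dirichletSum_le (N : ℕ) (y : ℝ) : ‖dirichletSum N y‖ ≤ N := by
  refine (norm_sum_le _ _).trans (le_of_eq ?_)
  have hterm : ∀ k : ℕ, ‖Complex.exp (2 * π * I * k * y)‖ = 1 := fun k => by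
    rw [show 2 * π * I * k * y = ((2 * π * k * y : ℝ) : ℂ) * I by push_cast; ring,
      norm_exp_ofReal_mul_I]
  simp [hterm]

theorem re_dirichletSum (N : ℕ) (y : ℝ) :
    (dirichletSum N y).re = ∑ k ∈ range N, Real.cos (2 * π * k * y) := by
  rw [dirichletSum, re_sum]
  refine sum_congr rfl fun k _ => ?_
  rw [show 2 * π * I * k * y = ((2 * π * k * y : ℝ) : ℂ) * I by push_cast; ring,
    exp_ofReal_mul_I_re]

/-- Near an integer all the phases `2πky`, `k < N`, lie within `π / 2` of a multiple of `2π`,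
where `cos t ≥ 1 - 2|t|/π`; summing these linear bounds leaves half of the peak value `N`. -/
theorem half_le_re_dirichletSum {N : ℕ} {y : ℝ} {M : ℤ} (h : ((N : ℝ) - 1) * |y - M| ≤ 1 / 4) :
    (N : ℝ) / 2 ≤ (dirichletSum N y).re := by
  rcases N with _ | n
  · simp [dirichletSum]
  set s := |y - M|
  have hs : 0 ≤ s := abs_nonneg _
  have hn : (n : ℝ) * s ≤ 1 / 4 := by simpa using h
  have hcos : ∀ k ∈ range (n + 1), 1 - 4 * s * k ≤ Real.cos (2 * π * k * y) := by
    intro k hk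
    have hk : (k : ℝ) ≤ n := by exact_mod_cast Nat.lt_succ_iff.mp (mem_range.mp hk)
    have hshift : Real.cos (2 * π * k * y) = Real.cos (2 * π * k * s) := by
      rw [← Real.cos_abs (2 * π * k * s), abs_mul, abs_abs, abs_of_nonneg (by positivity),
        show 2 * π * k * y = 2 * π * k * (y - M) + ((k * M : ℤ) : ℝ) * (2 * π) by push_cast; ring,
        Real.cos_add_int_mul_two_pi, ← Real.cos_abs (2 * π * k * (y - M)), abs_mul,
        abs_of_nonneg (by positivity : (0 : ℝ) ≤ 2 * π * k)]
    have hks : (k : ℝ) * s ≤ 1 / 4 := le_trans (by gcongr) hn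
    have := Real.one_sub_mul_le_cos (x := 2 * π * k * s) (by positivity)
      (by nlinarith [pi_pos])
    have hlin : 2 / π * (2 * π * k * s) = 4 * s * k := by field_simp; ring
    linarith
  have hgauss : ∑ k ∈ range (n + 1), (k : ℝ) = ((n : ℝ) + 1) * n / 2 := by
    have := congrArg (Nat.cast : ℕ → ℝ) (sum_range_id_mul_two (n + 1))
    push_cast at this
    linarith
  rw [re_dirichletSum]
  calc ((n + 1 : ℕ) : ℝ) / 2 ≤ ∑ k ∈ range (n + 1), (1 - 4 * s * k) := by
        rw [sum_sub_distrib, ← mul_sum, hgauss, sum_const, card_range, nsmul_one]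
        push_cast
        nlinarith
    _ ≤ _ := sum_le_sum hcos

theorem sq_norm_dirichletSum (N : ℕ) (y : ℝ) :
    ((‖dirichletSum N y‖ ^ 2 : ℝ) : ℂ) =
      ∑ k ∈ range N, ∑ l ∈ range N, Complex.exp (2 * π * I * ((k : ℂ) - l) * y) := by
  rw [ofReal_pow, ← mul_conj', dirichletSum, map_sum, sum_mul_sum]
  refine sum_congr rfl fun k _ => sum_congr rfl fun l _ => ?_
  rw [← Complex.exp_conj, ← Complex.exp_add]
  congr 1
  simp only [map_mul, map_ofNat, conj_ofReal, conj_I, map_natCast]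
  ring

theorem integral_sq_norm_dirichletSum (N : ℕ) {a : ℤ} (ha : a ≠ 0) (b : ℝ) :
    ∫ x in (0 : ℝ)..1, ‖dirichletSum N (a * x + b)‖ ^ 2 = N := by
  have hterm : ∀ k l : ℕ, ∫ x in (0 : ℝ)..1, Complex.exp (2 * π * I * ((k : ℂ) - l) *
      ((a : ℂ) * x + b)) = if k = l then 1 else 0 := by
    intro k l
    have : ∀ x : ℝ, Complex.exp (2 * π * I * ((k : ℂ) - l) * ((a : ℂ) * x + b)) =
        Complex.exp (2 * π * I * ((k : ℂ) - l) * b) *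
          Complex.exp (2 * π * I * ((((k : ℤ) - l) * a : ℤ) : ℂ) * x) := fun x => by
      rw [← Complex.exp_add]; push_cast; ring_nf
    simp_rw [this, integral_const_mul, integral_exp_two_pi_I_int_mul, mul_eq_zero,
      sub_eq_zero, Nat.cast_inj, ha, or_false]
    split_ifs with hkl <;> simp [hkl]
  have hcont : ∀ k l : ℕ, Continuous fun x : ℝ =>
      Complex.exp (2 * π * I * ((k : ℂ) - l) * ((a : ℂ) * x + b)) := by fun_prop
  apply ofReal_injective
  rw [← integral_ofReal]
  simp_rw [sq_norm_dirichletSum, ofReal_add, ofReal_mul, ofReal_intCast]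
  rw [integral_finsetSum fun k _ =>
    (continuous_finsetSum _ fun l _ => hcont k l).intervalIntegrable _ _]
  rw [sum_congr rfl fun k _ => integral_finsetSum fun l _ => (hcont k l).intervalIntegrable _ _]
  rw [sum_congr rfl fun k hk => (by simp only [hterm, sum_ite_eq, if_pos hk] : _ = (1 : ℂ))]
  simp

def fejerBump (N : ℕ) (y : ℝ) : ℝ := ‖dirichletSum N y‖ ^ 2 / N ^ 2

theorem fejerBump_nonneg (N : ℕ) (y : ℝ) : 0 ≤ fejerBump N y := by
  unfold fejerBump; positivity

theorem fejerBump_le_one (N : ℕ) (y : ℝ) : fejerBump N y ≤ 1 :=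
  div_le_one_of_le₀ (pow_le_pow_left₀ (norm_nonneg _) (norm_dirichletSum_le N y) 2)
    (by positivity)

theorem continuous_fejerBump (N : ℕ) : Continuous (fejerBump N) :=
  ((continuous_dirichletSum N).norm.pow 2).div_const _

theorem quarter_le_fejerBump {N : ℕ} (hN : 1 ≤ N) {y : ℝ} {M : ℤ}
    (h : ((N : ℝ) - 1) * |y - M| ≤ 1 / 4) : 1 / 4 ≤ fejerBump N y := by
  have hN0 : (0 : ℝ) < N := by exact_mod_cast hN
  have hnorm : (N : ℝ) / 2 ≤ ‖dirichletSum N y‖ :=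
    (half_le_re_dirichletSum h).trans (re_le_norm _)
  rw [fejerBump, le_div_iff₀ (by positivity)]
  nlinarith

theorem integral_fejerBump (N : ℕ) {a : ℤ} (ha : a ≠ 0) (b : ℝ) :
    ∫ x in (0 : ℝ)..1, fejerBump N (a * x + b) = (N : ℝ)⁻¹ := by
  simp only [fejerBump, intervalIntegral.integral_div]
  rw [integral_sq_norm_dirichletSum N ha b, sq, div_self_mul_self']

end

namespace SaturatingPolynomial

noncomputable section

def blockLength (j J : ℕ) : ℕ := 2 ^ (j - 1 - J)

theorem one_le_blockLength (j J : ℕ) : 1 ≤ blockLength j J := Nat.one_le_two_pow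

/-- `(N - 1) 2^{J-1}`, with `N = blockLength j J`, bounds both the frequencies of the bump at
scale `J` around the carrier `2^{j-1}` and, through `|x - K/2^J| ≤ 2^{-j}`, the phase drift across
its peak. -/
theorem four_mul_blockLength_sub_one_le {j J : ℕ} (hJ1 : 1 ≤ J) (hJj : J ≤ j) :
    4 * ((blockLength j J - 1) * 2 ^ (J - 1)) ≤ 2 ^ j := by
  rcases hJj.eq_or_lt with rfl | hlt
  · simp [blockLength]
  · calc 4 * ((blockLength j J - 1) * 2 ^ (J - 1)) ≤ 2 ^ 2 * (blockLength j J * 2 ^ (J - 1)) := by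
          gcongr; exacts [by norm_num, Nat.sub_le _ _]
      _ = 2 ^ j := by rw [blockLength, ← pow_add, ← pow_add]; congr 1; omega

def weight (p : ℝ) (j J : ℕ) : ℝ := 2 ^ (((j : ℝ) - J - 1) / p)

theorem weight_pos (p : ℝ) (j J : ℕ) : 0 < weight p j J := by
  unfold weight; positivity

def bump (j J : ℕ) (x : ℝ) : ℝ := fejerBump (blockLength j J) (2 ^ (J - 1) * x - 1 / 2)

def profile (p : ℝ) (j : ℕ) (x : ℝ) : ℝ := (j : ℝ)⁻¹ * ∑ J ∈ Icc 1 j, weight p j J * bump j J x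

theorem bump_nonneg (j J : ℕ) (x : ℝ) : 0 ≤ bump j J x := fejerBump_nonneg _ _

theorem weight_mul_bump_nonneg (p : ℝ) (j J : ℕ) (x : ℝ) : 0 ≤ weight p j J * bump j J x :=
  mul_nonneg (weight_pos p j J).le (bump_nonneg j J x)

theorem profile_nonneg (p : ℝ) (j : ℕ) (x : ℝ) : 0 ≤ profile p j x :=
  mul_nonneg (by positivity) (sum_nonneg fun J _ => weight_mul_bump_nonneg p j J x)

theorem continuous_bump (j J : ℕ) : Continuous (bump j J) :=
  (continuous_fejerBump _).comp (by fun_prop)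

theorem quarter_le_bump {j J : ℕ} (hJ1 : 1 ≤ J) (hJj : J ≤ j) {K : ℤ} (hK : Odd K) {x : ℝ}
    (hx : |x - K / 2 ^ J| ≤ 1 / 2 ^ j) : 1 / 4 ≤ bump j J x := by
  obtain ⟨M, rfl⟩ := hK
  have hN := one_le_blockLength j J
  refine quarter_le_fejerBump hN (M := M) ?_
  have hshift :
      2 ^ (J - 1) * x - 1 / 2 - M = 2 ^ (J - 1) * (x - ((2 * M + 1 : ℤ) : ℝ) / 2 ^ J) := by
    rw [show (2 : ℝ) ^ J = 2 * 2 ^ (J - 1) by rw [← pow_succ']; congr 1; omega]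
    push_cast
    field_simp
    ring
  have hB : ((blockLength j J : ℝ) - 1) * 2 ^ (J - 1) ≤ 2 ^ j / 4 := by
    have := (Nat.cast_le (α := ℝ)).2 (four_mul_blockLength_sub_one_le hJ1 hJj)
    push_cast [Nat.cast_sub hN] at this
    linarith
  have hN0 : (0 : ℝ) ≤ (blockLength j J : ℝ) - 1 := by
    have : (1 : ℝ) ≤ blockLength j J := by exact_mod_cast hN
    linarith
  calc ((blockLength j J : ℝ) - 1) * |2 ^ (J - 1) * x - 1 / 2 - M|
      = ((blockLength j J : ℝ) - 1) * 2 ^ (J - 1) * |x - ((2 * M + 1 : ℤ) : ℝ) / 2 ^ J| := by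
        rw [hshift, abs_mul, abs_of_pos (by positivity)]; ring
    _ ≤ 2 ^ j / 4 * (1 / 2 ^ j) := by gcongr
    _ = 1 / 4 := by field_simp

theorem le_profile {p : ℝ} {j J : ℕ} (hJ1 : 1 ≤ J) (hJj : J ≤ j) {K : ℤ} (hK : Odd K) {x : ℝ}
    (hx : |x - K / 2 ^ J| ≤ 1 / 2 ^ j) :
    1 / (4 * j) * (2 : ℝ) ^ (-(((J : ℝ) - j + 1) / p)) ≤ profile p j x := by
  have hw := (weight_pos p j J).le
  calc 1 / (4 * j) * (2 : ℝ) ^ (-(((J : ℝ) - j + 1) / p))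
      = (j : ℝ)⁻¹ * (weight p j J * (1 / 4)) := by
        rw [weight, show -(((J : ℝ) - j + 1) / p) = ((j : ℝ) - J - 1) / p by ring]; ring
    _ ≤ (j : ℝ)⁻¹ * ∑ J ∈ Icc 1 j, weight p j J * bump j J x := by
        gcongr
        exact (mul_le_mul_of_nonneg_left (quarter_le_bump hJ1 hJj hK hx) hw).trans
          (single_le_sum (fun J' _ => weight_mul_bump_nonneg p j J' x) (mem_Icc.2 ⟨hJ1, hJj⟩))

theorem integral_bump (j J : ℕ) : ∫ x in (0 : ℝ)..1, bump j J x = (blockLength j J : ℝ)⁻¹ := by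
  simpa [bump, sub_eq_add_neg] using
    integral_fejerBump (blockLength j J) (a := 2 ^ (J - 1)) (by positivity) (-(1 / 2))

theorem integral_rpow_weight_mul_bump_le_one {p : ℝ} (hp : 1 ≤ p) (j J : ℕ) :
    ∫ x in (0 : ℝ)..1, (weight p j J * bump j J x) ^ p ≤ 1 := by
  have hp0 : p ≠ 0 := by positivity
  have hpow : ∀ x, (weight p j J * bump j J x) ^ p = 2 ^ ((j : ℝ) - J - 1) * bump j J x ^ p := by
    intro x
    rw [Real.mul_rpow (weight_pos p j J).le (bump_nonneg j J x), weight,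
      ← Real.rpow_mul zero_le_two, div_mul_cancel₀ _ hp0]
  have hN : (2 : ℝ) ^ ((j : ℝ) - J - 1) ≤ blockLength j J := by
    have hexp : (j : ℝ) - J - 1 ≤ ((j - 1 - J : ℕ) : ℝ) := by
      have : (j : ℤ) - J - 1 ≤ ((j - 1 - J : ℕ) : ℤ) := by omega
      exact_mod_cast this
    calc (2 : ℝ) ^ ((j : ℝ) - J - 1) ≤ 2 ^ ((j - 1 - J : ℕ) : ℝ) :=
          Real.rpow_le_rpow_of_exponent_le one_le_two hexp
      _ = blockLength j J := by rw [Real.rpow_natCast, blockLength]; push_cast; rfl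
  simp_rw [hpow, integral_const_mul]
  calc (2 : ℝ) ^ ((j : ℝ) - J - 1) * ∫ x in (0 : ℝ)..1, bump j J x ^ p
      ≤ 2 ^ ((j : ℝ) - J - 1) * ∫ x in (0 : ℝ)..1, bump j J x := by
        gcongr
        exact integral_rpow_le_integral_of_le_one zero_le_one (continuous_bump j J)
          (bump_nonneg j J) (fun _ => fejerBump_le_one _ _) hp
    _ ≤ 1 := by
        have : (0 : ℝ) < blockLength j J := by exact_mod_cast one_le_blockLength j J
        rwa [integral_bump, ← div_eq_mul_inv, div_le_one this]

theorem integral_profile_rpow_le_one {p : ℝ} (hp : 1 ≤ p) {j : ℕ} (hj : 1 ≤ j) :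
    ∫ x in (0 : ℝ)..1, profile p j x ^ p ≤ 1 := by
  simpa [profile] using integral_mean_rpow_le (s := Icc 1 j) (nonempty_Icc.2 hj) zero_le_one hp
    (fun J _ => continuous_const.mul (continuous_bump j J))
    (fun J _ => weight_mul_bump_nonneg p j J)
    (fun J _ => integral_rpow_weight_mul_bump_le_one hp j J)

/-- `⟨J, k, l⟩` indexes the term `e((k - l)(2^{J-1}x - 1/2)) e(2^{j-1}x)` of
`profile p j x · e(2^{j-1}x)` obtained by expanding `|D_N|²` at scale `J`. -/
def modes (j : ℕ) : Finset (Σ _ : ℕ, ℕ × ℕ) :=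
  (Icc 1 j).sigma fun J => range (blockLength j J) ×ˢ range (blockLength j J)

def modeFreq (j : ℕ) (i : Σ _ : ℕ, ℕ × ℕ) : ℤ :=
  ((i.2.1 : ℤ) - i.2.2) * 2 ^ (i.1 - 1) + 2 ^ (j - 1)

def modeCoeff (p : ℝ) (j : ℕ) (i : Σ _ : ℕ, ℕ × ℕ) : ℂ :=
  (j : ℂ)⁻¹ * weight p j i.1 / (blockLength j i.1 : ℂ) ^ 2 *
    Complex.exp (-(π * I * ((i.2.1 : ℂ) - i.2.2)))

def saturatingCoeff (p : ℝ) (j : ℕ) (m : ℤ) : ℂ :=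
  ∑ i ∈ modes j with modeFreq j i = m, modeCoeff p j i

theorem modeFreq_mem_Ioo {j : ℕ} (hj : 1 ≤ j) {i : Σ _ : ℕ, ℕ × ℕ} (hi : i ∈ modes j) :
    0 < modeFreq j i ∧ modeFreq j i < 2 ^ j := by
  obtain ⟨J, k, l⟩ := i
  simp only [modes, mem_sigma, mem_Icc, mem_product, mem_range] at hi
  obtain ⟨⟨hJ1, hJj⟩, hk, hl⟩ := hi
  have hN := one_le_blockLength j J
  have hP : (0 : ℤ) < 2 ^ (J - 1) := by positivity
  have hkl : |(k : ℤ) - l| ≤ (blockLength j J : ℤ) - 1 := abs_le.2 ⟨by omega, by omega⟩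
  have hshift : |((k : ℤ) - l) * 2 ^ (J - 1)| ≤ ((blockLength j J : ℤ) - 1) * 2 ^ (J - 1) := by
    rw [abs_mul, abs_of_pos hP]
    exact mul_le_mul_of_nonneg_right hkl hP.le
  have hB : 4 * (((blockLength j J : ℤ) - 1) * 2 ^ (J - 1)) ≤ 2 ^ j := by
    have := (Nat.cast_le (α := ℤ)).2 (four_mul_blockLength_sub_one_le hJ1 hJj)
    push_cast [Nat.cast_sub hN] at this
    exact this
  have hcarrier : (2 : ℤ) ^ j = 2 * 2 ^ (j - 1) := by rw [← pow_succ']; congr 1; omega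
  have hone : (1 : ℤ) ≤ 2 ^ (j - 1) := one_le_pow₀ (by norm_num)
  rw [abs_le] at hshift
  simp only [modeFreq]
  constructor <;> linarith [hshift.1, hshift.2]

theorem saturatingCoeff_eq_zero {p : ℝ} {j : ℕ} (hj : 1 ≤ j) {m : ℤ} (hm : m ≤ 0 ∨ 2 ^ j ≤ m) :
    saturatingCoeff p j m = 0 :=
  sum_eq_zero fun i hi => by
    obtain ⟨hi, hfreq⟩ := mem_filter.1 hi
    have := modeFreq_mem_Ioo hj hi
    omega

theorem sum_modeCoeff_mul_exp (p : ℝ) (j : ℕ) (x : ℝ) :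
    ∑ i ∈ modes j, modeCoeff p j i * Complex.exp (2 * π * I * modeFreq j i * x) =
      profile p j x * Complex.exp (2 * π * I * 2 ^ (j - 1) * x) := by
  simp only [modes, sum_sigma, sum_product, profile, bump, fejerBump, ofReal_mul, ofReal_inv,
    ofReal_natCast, ofReal_sum, ofReal_div, sq_norm_dirichletSum, mul_sum, sum_mul, sum_div]
  refine sum_congr rfl fun J _ => sum_congr rfl fun k _ => sum_congr rfl fun l _ => ?_
  have hexp : Complex.exp (-(π * I * ((k : ℂ) - l))) *
      Complex.exp (2 * π * I * modeFreq j ⟨J, k, l⟩ * x) =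
      Complex.exp (2 * π * I * ((k : ℂ) - l) * (2 ^ (J - 1) * (x : ℂ) - 1 / 2)) *
        Complex.exp (2 * π * I * 2 ^ (j - 1) * x) := by
    rw [← Complex.exp_add, ← Complex.exp_add]
    congr 1
    push_cast [modeFreq]
    ring
  simp only [modeCoeff]
  push_cast
  linear_combination ((j : ℂ)⁻¹ * weight p j J / (blockLength j J : ℂ) ^ 2) * hexp

theorem norm_sum_saturatingCoeff_mul_exp {p : ℝ} {j : ℕ} (hj : 1 ≤ j) {T : Finset ℤ}
    (hT : ∀ m, 0 < m → m < 2 ^ j → m ∈ T) (x : ℝ) :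
    ‖∑ m ∈ T, saturatingCoeff p j m * Complex.exp (2 * π * I * m * x)‖ = profile p j x := by
  have hcarrier : ‖Complex.exp (2 * π * I * 2 ^ (j - 1) * x)‖ = 1 := by
    rw [show 2 * π * I * 2 ^ (j - 1) * x = ((2 * π * 2 ^ (j - 1) * x : ℝ) : ℂ) * I by
      push_cast; ring, norm_exp_ofReal_mul_I]
  unfold saturatingCoeff
  rw [sum_fiberwise_mul_of_maps_to (fun i hi => hT _ (modeFreq_mem_Ioo hj hi).1
      (modeFreq_mem_Ioo hj hi).2), sum_modeCoeff_mul_exp, norm_mul, hcarrier, mul_one,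
    norm_real, Real.norm_of_nonneg (profile_nonneg p j x)]

end

end SaturatingPolynomial

open SaturatingPolynomial

/-- Lemma 2.3: for `1 < p < ∞` and `j ≥ 1` there is a trigonometric polynomial `g_j`,
given by coefficients `a : ℤ → ℂ` supported in `[0, j·2^{j+1})`, with `‖g_j‖_{L^p(𝕋)} ≤ 1`,
such that for every `1 ≤ J ≤ j` and every `x` within distance `2^{-j}` of an odd multiple
of `2^{-J}` there are `0 ≤ n₁ < n₂ < j·2^{j+1}` with
`|S_{n₂} g_j(x) − S_{n₁} g_j(x)| ≥ (1/(4j))·2^{−(J−j+1)/p}`. -/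
theorem exists_saturating_polynomial (p : ℝ) (hp : 1 < p) (j : ℕ) (hj : 1 ≤ j) :
    ∃ a : ℤ → ℂ,
      (∀ m : ℤ, (m < 0 ∨ (j * 2 ^ (j + 1) : ℤ) ≤ m) → a m = 0) ∧
      ((∫ x in (0:ℝ)..1,
          (‖(∑ m ∈ Finset.Ico (0:ℤ) (j * 2 ^ (j + 1)),
            a m * Complex.exp (2 * π * Complex.I * m * x))‖) ^ p) ^ (1 / p) ≤ 1) ∧
      (∀ J : ℕ, 1 ≤ J → J ≤ j → ∀ K : ℤ, Odd K → 0 ≤ K → K ≤ 2 ^ J - 1 →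
        ∀ x : ℝ, |x - (K : ℝ) / 2 ^ J| ≤ 1 / 2 ^ j →
        ∃ n₁ n₂ : ℕ, n₁ < n₂ ∧ (n₂ : ℤ) < j * 2 ^ (j + 1) ∧
          (1 / (4 * j)) * (2:ℝ) ^ (-(((J:ℝ) - j + 1) / p)) ≤
            ‖((∑ m ∈ Finset.Icc (-(n₂:ℤ)) (n₂:ℤ), a m * Complex.exp (2 * π * Complex.I * m * x)) -
               (∑ m ∈ Finset.Icc (-(n₁:ℤ)) (n₁:ℤ), a m * Complex.exp (2 * π * Complex.I * m * x)))‖) := by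
  have hspec : (2 : ℤ) ^ j < j * 2 ^ (j + 1) :=
    calc (2 : ℤ) ^ j < 2 ^ (j + 1) := pow_lt_pow_right₀ (by norm_num) (by omega)
      _ ≤ j * 2 ^ (j + 1) := le_mul_of_one_le_left (by positivity) (by exact_mod_cast hj)
  refine ⟨saturatingCoeff p j, fun m hm => saturatingCoeff_eq_zero hj (by omega), ?_, ?_⟩
  · simp_rw [norm_sum_saturatingCoeff_mul_exp hj (T := Ico 0 (j * 2 ^ (j + 1)))
      fun m h0 h1 => mem_Ico.2 ⟨h0.le, h1.trans hspec⟩]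
    exact Real.rpow_le_one
      (integral_nonneg zero_le_one fun x _ => Real.rpow_nonneg (profile_nonneg p j x) p)
      (integral_profile_rpow_le_one hp.le hj) (by positivity)
  · intro J hJ1 hJj K hK _ _ x hx
    refine ⟨0, 2 ^ j, by positivity, by push_cast; exact hspec, ?_⟩
    have hS₀ : ∑ m ∈ Icc (-((0 : ℕ) : ℤ)) ((0 : ℕ) : ℤ),
        saturatingCoeff p j m * Complex.exp (2 * π * I * m * x) = 0 := by
      simp [saturatingCoeff_eq_zero hj (Or.inl le_rfl)]
    rw [hS₀, sub_zero, norm_sum_saturatingCoeff_mul_exp hj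
      fun m h0 h1 => mem_Icc.2 ⟨by push_cast; omega, by push_cast; omega⟩]
    exact le_profile hJ1 hJj hK hx
end

section
/- For β ∈ (0,1), δ ∈ (0,1), and K ≥ 2, there exist an integer k ≥ K, an arbitrarily large integer n, and a trigonometric polynomial P with spectrum in [0, 2n−1] such that ‖P‖_∞ ≤ 1 and log|S_n P(x)| ≥ (1−δ)β·log log n for every x in the union over 0 ≤ j < k of the intervals [j/k − 1/(2k·exp((log k)^β)), j/k + 1/(2k·exp((log k)^β))]. -/
/-!
Take `n = n₀ k` and `P(x) = e(n₀ k x) · (1/8) ∑_{0<j<n₀} sin(2π j k x) / j`, where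
`e(t) = exp(2π i t)`. Its frequencies `(n₀ ± j) k` lie in `[0, 2n)`, and the conjugate Dirichlet
sums `∑_{j ≤ M} sin(2π j t) / j` are bounded by `2π + 1` uniformly in `M` and `t` (termwise for
`j ≤ 1/‖t‖`, by Abel summation beyond), so `‖P‖_∞ ≤ 1`. The partial sum `S_n P` keeps exactly the
frequencies `(n₀ - j) k`, so `|S_n P(x)| = (1/16) |∑_{0<j<n₀} e(-j k x) / j|`; when `k x` is within
`1/(4π n₀)` of an integer the terms are nearly aligned and this is at least `(log n₀ - 1/2) / 16`.
With `n₀ ≈ exp((log k)^β / 2)` this beats `(log n)^((1-δ)β)` once `k` is large.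
-/

open Real Complex Finset Filter

theorem norm_sum_Ioc_smul_le_of_antitoneOn {E : Type*} [SeminormedAddCommGroup E]
    [NormedSpace ℝ E] {f : ℕ → ℝ} {g : ℕ → E} {a b : ℕ} {B : ℝ} (hab : a < b)
    (hf : AntitoneOn f (Set.Ici (a + 1))) (hfb : 0 ≤ f b)
    (hg : ∀ n, ‖∑ i ∈ range n, g i‖ ≤ B) :
    ‖∑ i ∈ Ioc a b, f i • g i‖ ≤ 2 * f (a + 1) * B := by
  have hf_le : ∀ i ∈ Ico (a + 1) b, f (i + 1) ≤ f i := fun i hi => by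
    have hai := (mem_Ico.1 hi).1
    exact hf (Set.mem_Ici.2 hai) (Set.mem_Ici.2 (by omega)) (by omega)
  have hfab : f b ≤ f (a + 1) := hf (Set.mem_Ici.2 le_rfl) (Set.mem_Ici.2 (by omega)) (by omega)
  have hsum : ‖∑ i ∈ Ioc a (b - 1), (f (i + 1) - f i) • ∑ j ∈ range (i + 1), g j‖
      ≤ (f (a + 1) - f b) * B := by
    rw [← Ico_add_one_add_one_eq_Ioc, Nat.sub_add_cancel (by omega)]
    calc _ ≤ ∑ i ∈ Ico (a + 1) b, (f i - f (i + 1)) * B := by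
          refine norm_sum_le_of_le _ fun i hi => ?_
          rw [norm_smul, Real.norm_of_nonpos (by linarith [hf_le i hi]), neg_sub]
          exact mul_le_mul_of_nonneg_left (hg _) (by linarith [hf_le i hi])
      _ = (f (a + 1) - f b) * B := by
          rw [← sum_mul, ← neg_sub (f b), ← sum_Ico_sub f (by omega : a + 1 ≤ b),
            ← sum_neg_distrib]
          simp only [neg_sub]
  have hend : ∀ c m, 0 ≤ f c → ‖f c • ∑ j ∈ range m, g j‖ ≤ f c * B := fun c m hc => by
    rw [norm_smul, Real.norm_of_nonneg hc]
    exact mul_le_mul_of_nonneg_left (hg _) hc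
  rw [sum_Ioc_by_parts f g hab]
  calc _ ≤ ‖f b • ∑ j ∈ range (b + 1), g j‖ + ‖f (a + 1) • ∑ j ∈ range (a + 1), g j‖
        + (f (a + 1) - f b) * B :=
        (norm_sub_le _ _).trans (add_le_add (norm_sub_le _ _) hsum)
    _ ≤ f b * B + f (a + 1) * B + (f (a + 1) - f b) * B := by
        gcongr
        exacts [hend b _ hfb, hend (a + 1) _ (hfb.trans hfab)]
    _ = 2 * f (a + 1) * B := by ring

theorem norm_geom_sum_le_of_norm_eq_one {z : ℂ} (hz : ‖z‖ = 1) (hz1 : z ≠ 1) (n : ℕ) :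
    ‖∑ j ∈ range n, z ^ j‖ ≤ 2 / ‖1 - z‖ := by
  rw [geom_sum_eq hz1, norm_div, ← norm_neg (z - 1), neg_sub]
  gcongr
  calc ‖z ^ n - 1‖ ≤ ‖z ^ n‖ + ‖(1 : ℂ)‖ := norm_sub_le _ _
    _ = 2 := by rw [norm_pow, hz]; norm_num

theorem abs_sin_two_pi_mul_le (j : ℕ) (x : ℝ) (r : ℤ) :
    |Real.sin (2 * π * j * x)| ≤ 2 * π * j * |x - r| := by
  rw [show 2 * π * j * x = 2 * π * j * (x - r) + (j * r : ℤ) * (2 * π) by push_cast; ring,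
    Real.sin_add_int_mul_two_pi]
  refine Real.abs_sin_le_abs.trans_eq ?_
  rw [abs_mul, abs_of_nonneg (by positivity)]

theorem four_mul_abs_sub_round_le_norm_one_sub_exp (x : ℝ) :
    4 * |x - round x| ≤ ‖1 - Complex.exp (2 * π * x * I)‖ := by
  have hπ := Real.pi_pos
  have hsin : ‖1 - Complex.exp (2 * π * x * I)‖ = 2 * |Real.sin (π * (x - round x))| := by
    rw [← norm_neg, neg_sub,
      show (2 * π * x * I : ℂ) = I * ((2 * π * x : ℝ) : ℂ) by push_cast; ring,
      norm_exp_I_mul_ofReal_sub_one, norm_mul, Real.norm_eq_abs, Real.norm_eq_abs, abs_two,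
      show π * (x - round x) = 2 * π * x / 2 - round x * π by ring,
      Real.sin_sub_int_mul_pi, abs_mul, abs_zpow, abs_neg, abs_one, one_zpow, one_mul]
  have hx : |π * (x - round x)| ≤ π / 2 := by
    rw [abs_mul, abs_of_pos hπ]; nlinarith [abs_sub_round x]
  calc 4 * |x - round x| = 2 * (2 / π * |π * (x - round x)|) := by
        rw [abs_mul, abs_of_pos hπ]; field_simp; ring
    _ ≤ _ := by rw [hsin]; gcongr; exact Real.mul_abs_le_abs_sin hx

theorem abs_sum_sin_div_le_card_mul (s : Finset ℕ) (x : ℝ) (r : ℤ) :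
    |∑ j ∈ s, Real.sin (2 * π * j * x) / j| ≤ 2 * π * #s * |x - r| := by
  refine (abs_sum_le_sum_abs _ _).trans ?_
  rw [mul_comm (2 * π), mul_assoc, ← nsmul_eq_mul, ← sum_const]
  refine sum_le_sum fun j _ => ?_
  rcases j.eq_zero_or_pos with rfl | hj
  · simp only [CharP.cast_eq_zero, div_zero, abs_zero]; positivity
  · rw [abs_div, Nat.abs_cast, div_le_iff₀ (by positivity)]
    linarith [abs_sin_two_pi_mul_le j x r]

theorem abs_sum_Ioc_sin_div_le {a b : ℕ} (hab : a < b) {x : ℝ} (hx : x ≠ round x) :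
    |∑ j ∈ Ioc a b, Real.sin (2 * π * j * x) / j| ≤ 1 / ((a + 1) * |x - round x|) := by
  set z := Complex.exp (2 * π * x * I)
  have hs : 0 < |x - round x| := abs_pos.2 (sub_ne_zero.2 hx)
  have hz4 : 4 * |x - round x| ≤ ‖1 - z‖ := four_mul_abs_sub_round_le_norm_one_sub_exp x
  have hz1 : z ≠ 1 := fun h => by simp only [h, sub_self, norm_zero] at hz4; linarith
  have him : ∑ j ∈ Ioc a b, Real.sin (2 * π * j * x) / j
      = (∑ j ∈ Ioc a b, (j : ℝ)⁻¹ • z ^ j).im := by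
    rw [Complex.im_sum]
    refine sum_congr rfl fun j _ => ?_
    rw [← Complex.exp_nat_mul,
      show (j : ℂ) * (2 * π * x * I) = ((2 * π * j * x : ℝ) : ℂ) * I by push_cast; ring,
      Complex.real_smul, Complex.im_ofReal_mul, Complex.exp_ofReal_mul_I_im, div_eq_inv_mul]
  have hanti : AntitoneOn (fun j : ℕ => (j : ℝ)⁻¹) (Set.Ici (a + 1)) := fun i hi j _ hij =>
    inv_anti₀ (Nat.cast_pos.2 (by simp only [Set.mem_Ici] at hi; omega)) (by exact_mod_cast hij)
  have hgeom := norm_geom_sum_le_of_norm_eq_one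
    (by simpa using Complex.norm_exp_ofReal_mul_I (2 * π * x)) hz1
  rw [him]
  calc _ ≤ ‖∑ j ∈ Ioc a b, (j : ℝ)⁻¹ • z ^ j‖ := Complex.abs_im_le_norm _
    _ ≤ 2 * ((a + 1 : ℕ) : ℝ)⁻¹ * (2 / ‖1 - z‖) :=
        norm_sum_Ioc_smul_le_of_antitoneOn hab hanti (inv_nonneg.2 b.cast_nonneg) hgeom
    _ ≤ 2 * ((a + 1 : ℕ) : ℝ)⁻¹ * (2 / (4 * |x - round x|)) := by gcongr
    _ = 1 / ((a + 1) * |x - round x|) := by push_cast; field_simp; ring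

theorem abs_sum_sin_two_pi_mul_div_le (M : ℕ) (x : ℝ) :
    |∑ j ∈ Icc 1 M, Real.sin (2 * π * j * x) / j| ≤ 2 * π + 1 := by
  have hπ := Real.pi_pos
  set s := |x - round x| with hs_def
  rcases eq_or_ne x (round x) with hx | hx
  · have := abs_sum_sin_div_le_card_mul (Icc 1 M) x (round x)
    rw [← hx, sub_self, abs_zero, mul_zero] at this
    linarith
  have hs : 0 < s := abs_pos.2 (sub_ne_zero.2 hx)
  set a := ⌊s⁻¹⌋₊
  have has : a * s ≤ 1 := calc
    a * s ≤ s⁻¹ * s := by gcongr; exact Nat.floor_le (inv_nonneg.2 hs.le)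
    _ = 1 := inv_mul_cancel₀ hs.ne'
  have has' : 1 < (a + 1) * s := (inv_lt_iff_one_lt_mul₀ hs).1 (Nat.lt_floor_add_one _)
  have head : ∀ c ≤ a, |∑ j ∈ Ioc 0 c, Real.sin (2 * π * j * x) / j| ≤ 2 * π := fun c hc => by
    refine (abs_sum_sin_div_le_card_mul _ x (round x)).trans ?_
    rw [Nat.card_Ioc, Nat.sub_zero, ← hs_def]
    have hcs : (c : ℝ) * s ≤ 1 := le_trans (by gcongr) has
    nlinarith
  rw [show Icc 1 M = Ioc 0 M from Icc_add_one_left_eq_Ioc 0 M]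
  rcases le_or_gt M a with hM | hM
  · linarith [head M hM]
  rw [← sum_Ioc_consecutive _ (Nat.zero_le a) hM.le]
  have tail := abs_sum_Ioc_sin_div_le hM hx
  rw [← hs_def] at tail
  have htail_le : 1 / ((a + 1) * s) ≤ 1 := (div_le_one (by positivity)).2 has'.le
  linarith [abs_add_le (∑ j ∈ Ioc 0 a, Real.sin (2 * π * j * x) / j)
    (∑ j ∈ Ioc a M, Real.sin (2 * π * j * x) / j), head a le_rfl]

theorem harmonic_sub_le_norm_sum_exp_div (m : ℕ) (t : ℝ) (r : ℤ) :
    harmonic m - 2 * π * m * |t - r| ≤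
      ‖∑ j ∈ Icc 1 m, Complex.exp (-(2 * π * I * j * t)) / j‖ := by
  have hterm : ∀ j ∈ Icc 1 m,
      ‖(1 - Complex.exp (-(2 * π * I * j * t))) / j‖ ≤ 2 * π * |t - r| := by
    intro j hj
    have hj : (0 : ℝ) < j := Nat.cast_pos.2 (mem_Icc.1 hj).1
    rw [show -(2 * π * I * j * t) = I * ((-(2 * π * j * (t - r)) : ℝ) : ℂ)
        + (-(j * r) : ℤ) * (2 * π * I) by push_cast; ring,
      Complex.exp_add, Complex.exp_int_mul_two_pi_mul_I, mul_one, norm_div, norm_sub_rev,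
      Complex.norm_natCast, div_le_iff₀ hj]
    refine Real.norm_exp_I_mul_ofReal_sub_one_le.trans_eq ?_
    rw [Real.norm_eq_abs, abs_neg, abs_mul, abs_of_pos (by positivity)]
    ring
  have hsum : ∑ j ∈ Icc 1 m, Complex.exp (-(2 * π * I * j * t)) / j
      = ((harmonic m : ℝ) : ℂ) - ∑ j ∈ Icc 1 m, (1 - Complex.exp (-(2 * π * I * j * t))) / j := by
    rw [harmonic_eq_sum_Icc]
    push_cast
    rw [← sum_sub_distrib]
    exact sum_congr rfl fun j _ => by ring
  have hB := norm_sum_le_of_le _ hterm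
  rw [sum_const, Nat.card_Icc, Nat.add_sub_cancel, nsmul_eq_mul] at hB
  rw [hsum]
  refine le_trans ?_ (norm_sub_norm_le _ _)
  rw [Complex.norm_real, Real.norm_eq_abs]
  linarith [le_abs_self (harmonic m : ℝ)]

/-- The coefficients of `e(n₀ k x) · (1/8) ∑_{0<j<n₀} sin(2π j k x) / j`. -/
noncomputable def saturatingCoeff (n₀ k : ℕ) (m : ℤ) : ℂ :=
  ∑ j ∈ Icc 1 (n₀ - 1),
    ((if m = (n₀ + j) * k then (16 * I * j)⁻¹ else 0)
      - (if m = (n₀ - j) * k then (16 * I * j)⁻¹ else 0))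

theorem sum_ite_sub_ite_mul (S : Finset ℤ) (p q : ℤ) (c : ℂ) (e : ℤ → ℂ) :
    ∑ m ∈ S, ((if m = p then c else 0) - (if m = q then c else 0)) * e m
      = (if p ∈ S then c * e p else 0) - (if q ∈ S then c * e q else 0) := by
  simp only [sub_mul, ite_mul, zero_mul, sum_sub_distrib, sum_ite_eq']

theorem sum_saturatingCoeff_mul (n₀ k : ℕ) (S : Finset ℤ) (e : ℤ → ℂ) :
    ∑ m ∈ S, saturatingCoeff n₀ k m * e m = ∑ j ∈ Icc 1 (n₀ - 1),
      ((if ((n₀ + j) * k : ℤ) ∈ S then (16 * I * j)⁻¹ * e ((n₀ + j) * k) else 0)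
        - (if ((n₀ - j) * k : ℤ) ∈ S then (16 * I * j)⁻¹ * e ((n₀ - j) * k) else 0)) := by
  simp only [saturatingCoeff, sum_mul]
  rw [sum_comm]
  simp only [sum_ite_sub_ite_mul]

theorem saturating_frequencies_bounds {n₀ j k : ℕ} (hj : j ∈ Icc 1 (n₀ - 1)) (hk : 0 < k) :
    0 ≤ ((n₀ - j) * k : ℤ) ∧ ((n₀ - j) * k : ℤ) ≤ (n₀ * k : ℕ) ∧
      ((n₀ * k : ℕ) : ℤ) < (n₀ + j) * k ∧ ((n₀ + j) * k : ℤ) < 2 * (n₀ * k : ℕ) := by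
  obtain ⟨hj1, hjn⟩ := mem_Icc.1 hj
  have hj1' : (1 : ℤ) ≤ j := by exact_mod_cast hj1
  have hjn' : (j : ℤ) < n₀ := by omega
  have hk' : (0 : ℤ) < k := by exact_mod_cast hk
  push_cast
  refine ⟨by nlinarith, by nlinarith, by nlinarith, by nlinarith⟩

theorem saturatingCoeff_eq_zero {n₀ k : ℕ} (hk : 0 < k) {m : ℤ}
    (hm : m < 0 ∨ 2 * ((n₀ * k : ℕ) : ℤ) ≤ m) : saturatingCoeff n₀ k m = 0 := by
  refine sum_eq_zero fun j hj => ?_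
  obtain ⟨h₁, h₂, h₃, h₄⟩ := saturating_frequencies_bounds hj hk
  have hp : m ≠ (n₀ + j) * k := by
    rintro rfl; rcases hm with hm | hm <;> linarith [Int.natCast_nonneg (n₀ * k)]
  have hq : m ≠ (n₀ - j) * k := by rintro rfl; rcases hm with hm | hm <;> linarith
  rw [if_neg hp, if_neg hq, sub_self]

theorem sum_Ico_saturatingCoeff_mul {n₀ k : ℕ} (hk : 0 < k) (e : ℤ → ℂ) :
    ∑ m ∈ Ico (0 : ℤ) (2 * (n₀ * k : ℕ)), saturatingCoeff n₀ k m * e m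
      = ∑ j ∈ Icc 1 (n₀ - 1), (16 * I * j)⁻¹ * (e ((n₀ + j) * k) - e ((n₀ - j) * k)) := by
  rw [sum_saturatingCoeff_mul]
  refine sum_congr rfl fun j hj => ?_
  obtain ⟨h₁, h₂, h₃, h₄⟩ := saturating_frequencies_bounds hj hk
  rw [if_pos (mem_Ico.2 ⟨by linarith [Int.natCast_nonneg (n₀ * k)], h₄⟩),
    if_pos (mem_Ico.2 ⟨h₁, by linarith⟩), mul_sub]

theorem sum_Icc_saturatingCoeff_mul {n₀ k : ℕ} (hk : 0 < k) (e : ℤ → ℂ) :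
    ∑ m ∈ Icc (-((n₀ * k : ℕ) : ℤ)) (n₀ * k : ℕ), saturatingCoeff n₀ k m * e m
      = -∑ j ∈ Icc 1 (n₀ - 1), (16 * I * j)⁻¹ * e ((n₀ - j) * k) := by
  rw [sum_saturatingCoeff_mul, ← sum_neg_distrib]
  refine sum_congr rfl fun j hj => ?_
  obtain ⟨h₁, h₂, h₃, -⟩ := saturating_frequencies_bounds hj hk
  rw [if_neg fun h => (mem_Icc.1 h).2.not_gt h₃,
    if_pos (mem_Icc.2 ⟨by linarith [Int.natCast_nonneg (n₀ * k)], h₂⟩), zero_sub]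

theorem norm_sum_Ico_saturatingCoeff_mul_exp_le_one {n₀ k : ℕ} (hk : 0 < k) (x : ℝ) :
    ‖∑ m ∈ Ico (0 : ℤ) (2 * (n₀ * k : ℕ)), saturatingCoeff n₀ k m *
      Complex.exp (2 * π * I * m * x)‖ ≤ 1 := by
  set E := Complex.exp ((2 * π * (n₀ * k * x) : ℝ) * I)
  have hterm : ∀ j ∈ Icc 1 (n₀ - 1), (16 * I * j)⁻¹ *
      (Complex.exp (2 * π * I * (((n₀ + j) * k : ℤ) : ℂ) * x)
        - Complex.exp (2 * π * I * (((n₀ - j) * k : ℤ) : ℂ) * x))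
      = E * ((Real.sin (2 * π * j * (k * x)) / j / 8 : ℝ) : ℂ) := by
    intro j _
    set θ := 2 * π * j * (k * x)
    have hsin : Complex.exp (θ * I) - Complex.exp ((-θ : ℝ) * I) = 2 * I * Real.sin θ := by
      rw [Complex.exp_mul_I, Complex.exp_mul_I, ← Complex.ofReal_cos, ← Complex.ofReal_cos,
        ← Complex.ofReal_sin, ← Complex.ofReal_sin, Real.cos_neg, Real.sin_neg]
      push_cast; ring
    rw [show 2 * π * I * (((n₀ + j) * k : ℤ) : ℂ) * x = ((2 * π * (n₀ * k * x) : ℝ) : ℂ) * I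
        + (θ : ℂ) * I by simp only [θ]; push_cast; ring,
      show 2 * π * I * (((n₀ - j) * k : ℤ) : ℂ) * x = ((2 * π * (n₀ * k * x) : ℝ) : ℂ) * I
        + ((-θ : ℝ) : ℂ) * I by simp only [θ]; push_cast; ring,
      Complex.exp_add, Complex.exp_add]
    simp only [mul_inv, Complex.inv_I, Complex.ofReal_div, Complex.ofReal_natCast,
      Complex.ofReal_ofNat]
    linear_combination (16⁻¹ * -I * (j : ℂ)⁻¹ * E) * hsin - (E * Real.sin θ / j / 8) * I_sq
  rw [sum_Ico_saturatingCoeff_mul hk, sum_congr rfl hterm, ← mul_sum, ← ofReal_sum, norm_mul,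
    norm_exp_ofReal_mul_I, one_mul, norm_real, Real.norm_eq_abs, ← sum_div, abs_div,
    abs_of_pos (by norm_num : (0 : ℝ) < 8), div_le_one (by norm_num : (0 : ℝ) < 8)]
  linarith [abs_sum_sin_two_pi_mul_div_le (n₀ - 1) (k * x), Real.pi_lt_d2]

theorem norm_sum_Icc_saturatingCoeff_mul_exp {n₀ k : ℕ} (hk : 0 < k) (x : ℝ) :
    ‖∑ m ∈ Icc (-((n₀ * k : ℕ) : ℤ)) (n₀ * k : ℕ), saturatingCoeff n₀ k m *
      Complex.exp (2 * π * I * m * x)‖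
      = ‖∑ j ∈ Icc 1 (n₀ - 1), Complex.exp (-(2 * π * I * j * (k * x))) / j‖ / 16 := by
  set E := Complex.exp ((2 * π * (n₀ * k * x) : ℝ) * I)
  have hterm : ∀ j ∈ Icc 1 (n₀ - 1),
      (16 * I * j)⁻¹ * Complex.exp (2 * π * I * (((n₀ - j) * k : ℤ) : ℂ) * x)
        = (16 * I)⁻¹ * E * (Complex.exp (-(2 * π * I * j * (k * x))) / j) := fun j _ => by
    rw [show 2 * π * I * (((n₀ - j) * k : ℤ) : ℂ) * x = ((2 * π * (n₀ * k * x) : ℝ) : ℂ) * I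
      + -(2 * π * I * j * (k * x)) by push_cast; ring, Complex.exp_add]
    ring
  rw [sum_Icc_saturatingCoeff_mul hk, sum_congr rfl hterm, ← mul_sum, norm_neg, norm_mul,
    norm_mul, norm_inv, norm_mul, Complex.norm_I, mul_one, norm_exp_ofReal_mul_I]
  norm_num
  ring

theorem eventually_saturating_parameters {β d : ℝ} (hd : 0 ≤ d) (hdβ : d < β) :
    ∀ᶠ L : ℝ in atTop,
      1 ≤ L ∧ 2 * π ≤ Real.exp (L ^ β / 2) ∧ (3 * L) ^ d ≤ (L ^ β / 2 - 1) / 16 := by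
  have hgap : ∀ᶠ L : ℝ in atTop, 32 * (3 ^ d + 1) ≤ L ^ (β - d) :=
    (tendsto_rpow_atTop (sub_pos.2 hdβ)).eventually_ge_atTop _
  have hbig : ∀ᶠ L : ℝ in atTop, 4 * π ≤ L ^ β :=
    (tendsto_rpow_atTop (hd.trans_lt hdβ)).eventually_ge_atTop _
  filter_upwards [eventually_ge_atTop 1, hgap, hbig] with L hL hgap hbig
  refine ⟨hL, by linarith [Real.add_one_le_exp (L ^ β / 2)], ?_⟩
  have hLd : 1 ≤ L ^ d := Real.one_le_rpow hL hd
  have hsplit : L ^ β = L ^ d * L ^ (β - d) := by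
    rw [← Real.rpow_add (by linarith), add_sub_cancel]
  rw [Real.mul_rpow (by norm_num) (by linarith), hsplit]
  nlinarith [Real.rpow_nonneg (by norm_num : (0 : ℝ) ≤ 3) d]

theorem sub_half_le_norm_sum_exp_div {y t : ℝ} {r : ℤ} (h2π : 2 * π ≤ Real.exp (y / 2))
    (ht : |t - r| ≤ 1 / (2 * Real.exp y)) :
    y / 2 - 1 / 2 ≤
      ‖∑ j ∈ Icc 1 (⌈Real.exp (y / 2)⌉₊ - 1), Complex.exp (-(2 * π * I * j * t)) / j‖ := by
  set h := y / 2
  have hpos := Real.exp_pos h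
  have hn₀ : 1 ≤ ⌈Real.exp h⌉₊ := Nat.one_le_iff_ne_zero.2 (Nat.ceil_pos.2 hpos).ne'
  have hm : ((⌈Real.exp h⌉₊ - 1 : ℕ) : ℝ) ≤ Real.exp h := by
    rw [Nat.cast_sub hn₀, Nat.cast_one, sub_le_iff_le_add]
    exact (Nat.ceil_lt_add_one hpos.le).le
  have hH : h ≤ harmonic (⌈Real.exp h⌉₊ - 1) := by
    refine le_trans ?_ (log_add_one_le_harmonic _)
    rw [Nat.sub_add_cancel hn₀]
    calc h = Real.log (Real.exp h) := (Real.log_exp h).symm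
      _ ≤ _ := Real.log_le_log hpos (Nat.le_ceil _)
  have hsmall : 2 * π * ((⌈Real.exp h⌉₊ - 1 : ℕ) : ℝ) * |t - r| ≤ 1 / 2 := by
    rw [show y = h + h by ring, Real.exp_add] at ht
    calc _ ≤ 2 * π * Real.exp h * (1 / (2 * (Real.exp h * Real.exp h))) := by gcongr
      _ = π / Real.exp h := by field_simp
      _ ≤ 1 / 2 := by rw [div_le_iff₀ hpos]; linarith
  linarith [harmonic_sub_le_norm_sum_exp_div (⌈Real.exp h⌉₊ - 1) t r]

theorem abs_mul_sub_le_of_abs_sub_div_le {k : ℕ} (hk : 0 < k) {x c : ℝ} {j : ℕ}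
    (hx : |x - j / k| ≤ 1 / (2 * k * c)) : |k * x - j| ≤ 1 / (2 * c) := by
  have hkR : (0 : ℝ) < k := Nat.cast_pos.2 hk
  rw [show k * x - j = k * (x - j / k) by field_simp, abs_mul, abs_of_pos hkR]
  calc _ ≤ (k : ℝ) * (1 / (2 * k * c)) := by gcongr
    _ = 1 / (2 * c) := by field_simp

theorem log_ceil_exp_le {h : ℝ} (hh : 0 ≤ h) : Real.log ⌈Real.exp h⌉₊ ≤ h + 1 := by
  have hpos := Real.exp_pos h
  have h2 : (⌈Real.exp h⌉₊ : ℝ) ≤ 2 * Real.exp h :=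
    Nat.ceil_le_two_mul (by linarith [Real.one_le_exp hh])
  calc Real.log ⌈Real.exp h⌉₊ ≤ Real.log (2 * Real.exp h) :=
        Real.log_le_log (by positivity) h2
    _ = Real.log 2 + h := by rw [Real.log_mul two_ne_zero hpos.ne', Real.log_exp]
    _ ≤ h + 1 := by linarith [Real.log_two_lt_d9]

theorem mul_log_log_ceil_exp_mul_le {β d c : ℝ} (hβ : β ≤ 1) (hd : 0 ≤ d) {k : ℕ}
    (hk : 1 ≤ Real.log k) (hc : (3 * Real.log k) ^ d ≤ c) :
    d * Real.log (Real.log ((⌈Real.exp (Real.log k ^ β / 2)⌉₊ * k : ℕ) : ℝ)) ≤ Real.log c := by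
  set L := Real.log k
  have hkR : (0 : ℝ) < k := Nat.cast_pos.2 (Nat.pos_of_ne_zero fun h => by norm_num [L, h] at hk)
  have hLβ : L ^ β ≤ L := by simpa using Real.rpow_le_rpow_of_exponent_le hk hβ
  have hlog_eq : Real.log ((⌈Real.exp (L ^ β / 2)⌉₊ * k : ℕ) : ℝ)
      = Real.log ⌈Real.exp (L ^ β / 2)⌉₊ + L := by
    rw [Nat.cast_mul, Real.log_mul (by positivity) hkR.ne']
  have hlog_pos : 0 < Real.log ((⌈Real.exp (L ^ β / 2)⌉₊ * k : ℕ) : ℝ) := by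
    rw [hlog_eq]; linarith [Real.log_natCast_nonneg ⌈Real.exp (L ^ β / 2)⌉₊]
  have hlog_le : Real.log ((⌈Real.exp (L ^ β / 2)⌉₊ * k : ℕ) : ℝ) ≤ 3 * L := by
    rw [hlog_eq]; linarith [log_ceil_exp_le (h := L ^ β / 2) (by positivity)]
  rw [← Real.log_rpow hlog_pos]
  exact Real.log_le_log (by positivity) ((Real.rpow_le_rpow hlog_pos.le hlog_le hd).trans hc)

theorem exists_saturating_polynomial_continuous_general (β δ : ℝ) (hβ : β ∈ Set.Ioo (0:ℝ) 1)
    (hδ : δ ∈ Set.Ioo (0:ℝ) 1) (K : ℕ) :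
    ∀ N : ℕ, ∃ (k n : ℕ) (a : ℤ → ℂ), K ≤ k ∧ N ≤ n ∧
      (∀ m : ℤ, (m < 0 ∨ (2 * n : ℤ) ≤ m) → a m = 0) ∧
      (∀ x : ℝ, ‖(∑ m ∈ Finset.Ico (0:ℤ) (2 * n),
          a m * Complex.exp (2 * π * Complex.I * m * x))‖ ≤ 1) ∧
      (∀ x : ℝ, (∃ j : ℕ, j < k ∧
          |x - (j : ℝ) / k| ≤ 1 / (2 * k * Real.exp ((Real.log k) ^ β))) →
        (1 - δ) * β * Real.log (Real.log n) ≤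
          Real.log (‖(∑ m ∈ Finset.Icc (-(n:ℤ)) (n:ℤ),
            a m * Complex.exp (2 * π * Complex.I * m * x))‖)) := by
  intro N
  obtain ⟨hβ0, hβ1⟩ := hβ
  obtain ⟨hδ0, hδ1⟩ := hδ
  have hd : 0 ≤ (1 - δ) * β := mul_nonneg (by linarith) hβ0.le
  obtain ⟨k, ⟨hL1, h2π, hgrowth⟩, hk⟩ :=
    (((tendsto_log_atTop.comp tendsto_natCast_atTop_atTop).eventually
      (eventually_saturating_parameters (β := β) hd (by nlinarith))).and
      (eventually_ge_atTop (max K N))).exists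
  simp only [Function.comp_apply] at hL1 h2π hgrowth
  have hk0 : 0 < k := Nat.pos_of_ne_zero fun h => by norm_num [h] at hL1
  set n₀ := ⌈Real.exp (Real.log k ^ β / 2)⌉₊
  refine ⟨k, n₀ * k, saturatingCoeff n₀ k, le_of_max_le_left hk,
    (le_of_max_le_right hk).trans (Nat.le_mul_of_pos_left k (Nat.ceil_pos.2 (Real.exp_pos _))),
    fun m hm => saturatingCoeff_eq_zero hk0 hm,
    norm_sum_Ico_saturatingCoeff_mul_exp_le_one hk0, ?_⟩
  rintro x ⟨j₀, -, hx⟩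
  have hT := sub_half_le_norm_sum_exp_div h2π (abs_mul_sub_le_of_abs_sub_div_le hk0 hx)
  push_cast at hT
  have hpos : 0 < (Real.log k ^ β / 2 - 1) / 16 :=
    (by positivity : (0 : ℝ) < (3 * Real.log k) ^ ((1 - δ) * β)).trans_le hgrowth
  rw [norm_sum_Icc_saturatingCoeff_mul_exp hk0]
  exact (mul_log_log_ceil_exp_mul_le hβ1.le hd hL1 hgrowth).trans
    (Real.log_le_log hpos (by linarith))

/-- Lemma 3.2: for `β, δ ∈ (0,1)` and `K ≥ 2` there exist `k ≥ K`, an arbitrarily large `n`,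
and a trigonometric polynomial `P` with spectrum in `[0, 2n-1]`, `‖P‖_∞ ≤ 1`, such that
`log|S_n P(x)| ≥ (1−δ)β log log n` on the union of the intervals of half-length
`1/(2k exp((log k)^β))` centered at the points `j/k`, `0 ≤ j < k`. -/
theorem exists_saturating_polynomial_continuous (β δ : ℝ) (hβ : β ∈ Set.Ioo (0:ℝ) 1)
    (hδ : δ ∈ Set.Ioo (0:ℝ) 1) (K : ℕ) (hK : 2 ≤ K) :
    ∀ N : ℕ, ∃ (k n : ℕ) (a : ℤ → ℂ), K ≤ k ∧ N ≤ n ∧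
      (∀ m : ℤ, (m < 0 ∨ (2 * n : ℤ) ≤ m) → a m = 0) ∧
      (∀ x : ℝ, ‖(∑ m ∈ Finset.Ico (0:ℤ) (2 * n),
          a m * Complex.exp (2 * π * Complex.I * m * x))‖ ≤ 1) ∧
      (∀ x : ℝ, (∃ j : ℕ, j < k ∧
          |x - (j : ℝ) / k| ≤ 1 / (2 * k * Real.exp ((Real.log k) ^ β))) →
        (1 - δ) * β * Real.log (Real.log n) ≤
          Real.log (‖(∑ m ∈ Finset.Icc (-(n:ℤ)) (n:ℤ),
            a m * Complex.exp (2 * π * Complex.I * m * x))‖)) :=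
  exists_saturating_polynomial_continuous_general β δ hβ hδ K
end
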